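/- Let p and q be positive integers and b > 0 a real number. Let Δ_p be the vertex set of a p-dimensional regular simplex with side length b and Δ_q the vertex set of a q-dimensional regular simplex with side length b. Then for every positive integer r, every coloring of Euclidean space E^{pq+2} with r colors contains a rainbow congruent copy of Δ_p or a monochromatic congruent copy of Δ_q. -/

import Mathlib

/-!
The `n` points `single k (b/√2)` of `E^n` are the vertices of a regular simplex of side `b`;
since an injection of coordinates extends by zero to an isometry, any `s` of them form a congruent
copy of the `s`-point simplex. Among the `pq + 2` vertices in
`E^{pq+2}`, either at least `p + 1` colours occur, giving a rainbow `Δ_p`, or at most `p` colours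
occur and by pigeonhole one of them is taken by at least `q + 1` vertices, giving a monochromatic
`Δ_q`.
-/

/-- `f` maps the configuration `K ⊆ E^m` to a congruent copy of itself in `E^d`: it preserves
all pairwise distances between points of `K` (hence is injective on `K`). -/
def IsCongruentCopy {m d : ℕ} (K : Set (EuclideanSpace ℝ (Fin m)))
    (f : EuclideanSpace ℝ (Fin m) → EuclideanSpace ℝ (Fin d)) : Prop :=
  ∀ x ∈ K, ∀ y ∈ K, dist (f x) (f y) = dist x y

/-- The coloring `χ` of `E^d` contains a monochromatic congruent copy of `K ⊆ E^m`. -/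
def HasMonoCopy {r m d : ℕ} (χ : EuclideanSpace ℝ (Fin d) → Fin r)
    (K : Set (EuclideanSpace ℝ (Fin m))) : Prop :=
  ∃ f, IsCongruentCopy K f ∧ ∃ col : Fin r, ∀ x ∈ K, χ (f x) = col

/-- The coloring `χ` of `E^d` contains a rainbow congruent copy of `K ⊆ E^m`. -/
def HasRainbowCopy {r m d : ℕ} (χ : EuclideanSpace ℝ (Fin d) → Fin r)
    (K : Set (EuclideanSpace ℝ (Fin m))) : Prop :=
  ∃ f, IsCongruentCopy K f ∧ ∀ x ∈ K, ∀ y ∈ K, x ≠ y → χ (f x) ≠ χ (f y)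

/-- The vertex set of a regular `(s-1)`-dimensional simplex with side length `a`, realized in
`E^s` as the set of points with exactly one nonzero coordinate, equal to `a/√2`. -/
def simplexVertices (s : ℕ) (a : ℝ) : Set (EuclideanSpace ℝ (Fin s)) :=
  Set.range fun i : Fin s => EuclideanSpace.single i (a / Real.sqrt 2)

/-- The Cartesian product `K₁ ∗ K₂ ⊆ E^{m₁+m₂}` of configurations `K₁ ⊆ E^{m₁}` and
`K₂ ⊆ E^{m₂}`. -/
def cartesianProd {m₁ m₂ : ℕ} (K₁ : Set (EuclideanSpace ℝ (Fin m₁)))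
    (K₂ : Set (EuclideanSpace ℝ (Fin m₂))) : Set (EuclideanSpace ℝ (Fin (m₁ + m₂))) :=
  {z | ∃ x ∈ K₁, ∃ y ∈ K₂,
    (∀ i : Fin m₁, z (Fin.castAdd m₂ i) = x i) ∧ (∀ j : Fin m₂, z (Fin.natAdd m₁ j) = y j)}

open EuclideanSpace

theorem exists_injective_comp_or_const_of_mul_lt_card {α β : Type*} [Fintype α] (c : α → β)
    {p q : ℕ} (h : p * q < Fintype.card α) :
    (∃ sel : Fin (p + 1) → α, Function.Injective (c ∘ sel)) ∨
      ∃ sel : Fin (q + 1) → α, Function.Injective sel ∧ ∃ y, ∀ i, c (sel i) = y := by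
  classical
  by_cases hcard : p + 1 ≤ Fintype.card (Set.range c)
  · obtain ⟨e⟩ := Function.Embedding.nonempty_of_card_le (α := Fin (p + 1)) (β := Set.range c)
      (by simpa using hcard)
    refine Or.inl ⟨Set.rangeSplitting c ∘ e, ?_⟩
    have hsection : c ∘ Set.rangeSplitting c ∘ e = Subtype.val ∘ e :=
      funext fun i => Set.apply_rangeSplitting c (e i)
    rw [hsection]
    exact Subtype.val_injective.comp e.injective
  · have hlt : Fintype.card (Set.range c) * q < Fintype.card α :=
      lt_of_le_of_lt (Nat.mul_le_mul_right q (by omega)) h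
    obtain ⟨y, hy⟩ := Fintype.exists_lt_card_fiber_of_mul_lt_card (Set.rangeFactorization c) hlt
    obtain ⟨e⟩ := Function.Embedding.nonempty_of_card_le (α := Fin (q + 1))
      (β := {x // Set.rangeFactorization c x = y}) (by simpa [Fintype.card_subtype] using hy)
    exact Or.inr ⟨Subtype.val ∘ e, Subtype.val_injective.comp e.injective, y,
      fun i => congrArg Subtype.val (e i).2⟩

theorem EuclideanSpace.dist_single_single_of_ne {ι : Type*} [Fintype ι] [DecidableEq ι]
    {i j : ι} (hij : i ≠ j) (a : ℝ) :
    dist (single i a : EuclideanSpace ℝ ι) (single j a) = √2 * |a| := by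
  have hinner : inner ℝ (single i a : EuclideanSpace ℝ ι) (single j a) = 0 := by
    simp [inner_single_left, hij.symm]
  rw [dist_eq_norm, ← Real.sqrt_sq (norm_nonneg _), norm_sub_sq_real, hinner, PiLp.norm_single,
    PiLp.norm_single, Real.norm_eq_abs, sq_abs, ← Real.sqrt_sq_eq_abs,
    ← Real.sqrt_mul zero_le_two]
  congr 1
  ring

noncomputable def extendByZero {ι κ : Type*} [Fintype ι] [DecidableEq κ] (sel : ι → κ)
    (x : EuclideanSpace ℝ ι) : EuclideanSpace ℝ κ :=
  ∑ i, single (sel i) (x i)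

theorem extendByZero_single {ι κ : Type*} [Fintype ι] [DecidableEq ι] [DecidableEq κ]
    (sel : ι → κ) (i : ι) (a : ℝ) :
    extendByZero sel (single i a) = single (sel i) a := by
  rw [extendByZero, Finset.sum_eq_single i (fun j _ hji => by simp [hji]) (by simp)]
  simp

theorem isCongruentCopy_simplexVertices_extendByZero {s n : ℕ} {sel : Fin s → Fin n}
    (hsel : Function.Injective sel) (a : ℝ) :
    IsCongruentCopy (simplexVertices s a) (extendByZero sel) := by
  rintro _ ⟨i, rfl⟩ _ ⟨j, rfl⟩
  simp only [extendByZero_single]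
  rcases eq_or_ne i j with rfl | hij
  · simp
  · rw [dist_single_single_of_ne hij, dist_single_single_of_ne (hsel.ne hij)]

theorem hasRainbowCopy_simplexVertices {r s d : ℕ} (χ : EuclideanSpace ℝ (Fin d) → Fin r) (a : ℝ)
    {sel : Fin s → Fin d} (hsel : Function.Injective fun i => χ (single (sel i) (a / √2))) :
    HasRainbowCopy χ (simplexVertices s a) := by
  refine ⟨extendByZero sel, isCongruentCopy_simplexVertices_extendByZero
    (Function.Injective.of_comp (f := fun k => χ (single k (a / √2))) hsel) a, ?_⟩
  rintro _ ⟨i, rfl⟩ _ ⟨j, rfl⟩ hne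
  simp only [extendByZero_single]
  exact hsel.ne fun h => hne (by rw [h])

theorem hasMonoCopy_simplexVertices {r s d : ℕ} (χ : EuclideanSpace ℝ (Fin d) → Fin r) (a : ℝ)
    {sel : Fin s → Fin d} (hsel : Function.Injective sel) {col : Fin r}
    (hcol : ∀ i, χ (single (sel i) (a / √2)) = col) :
    HasMonoCopy χ (simplexVertices s a) := by
  refine ⟨extendByZero sel, isCongruentCopy_simplexVertices_extendByZero hsel a, col, ?_⟩
  rintro _ ⟨i, rfl⟩
  simp only [extendByZero_single, hcol]

theorem euclidean_gallai_ramsey_simplices_general (p q : ℕ) (b : ℝ) (r : ℕ)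
    (χ : EuclideanSpace ℝ (Fin (p * q + 2)) → Fin r) :
    HasRainbowCopy χ (simplexVertices (p + 1) b) ∨
    HasMonoCopy χ (simplexVertices (q + 1) b) := by
  obtain ⟨sel, hsel⟩ | ⟨sel, hsel, col, hcol⟩ :=
    exists_injective_comp_or_const_of_mul_lt_card
      (fun k : Fin (p * q + 2) => χ (single k (b / √2))) (p := p) (q := q) (by simp)
  · exact Or.inl (hasRainbowCopy_simplexVertices χ b hsel)
  · exact Or.inr (hasMonoCopy_simplexVertices χ b hsel hcol)

/-- For positive integers `p, q` and `b > 0`, let `Δ_p` (resp. `Δ_q`) be the vertex set of a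
`p`-dimensional (resp. `q`-dimensional) regular simplex with side length `b`. Then for every
positive integer `r`, every `r`-coloring of `E^{pq+2}` contains a rainbow congruent copy of
`Δ_p` or a monochromatic congruent copy of `Δ_q`. -/
theorem euclidean_gallai_ramsey_simplices (p q : ℕ) (hp : 0 < p) (hq : 0 < q)
    (b : ℝ) (hb : 0 < b) (r : ℕ) (hr : 0 < r)
    (χ : EuclideanSpace ℝ (Fin (p * q + 2)) → Fin r) :
    HasRainbowCopy χ (simplexVertices (p + 1) b) ∨
    HasMonoCopy χ (simplexVertices (q + 1) b) :=
  euclidean_gallai_ramsey_simplices_general p q b r χ
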